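/- Let n ≥ 3 be odd. For all r, s ∈ {1,…,n}: (i) ē_r · e_s = 0 (standard ℝ³ inner product) if and only if r ≡ s (mod n), i.e., the only extreme effect of the odd n-gon model orthogonal to the non-ray extremal effect ē_r is e_r; and (ii) ē_r · ē_s > 0 for all r, s, i.e., no two non-ray extremal effects are orthogonal. -/
import Mathlib


open Real Matrix

/-- `r_n = sqrt(sec(π/n))`. -/
noncomputable def rpoly (n : ℕ) : ℝ := Real.sqrt (1 / Real.cos (Real.pi / n))

/-- Ray-extremal effects of the odd `n`-gon model:
`e_i = (1/(1+r_n²))·(r_n cos(2πi/n), r_n sin(2πi/n), 1)ᵀ`. -/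
noncomputable def eOdd (n i : ℕ) : Fin 3 → ℝ :=
  (1 / (1 + rpoly n ^ 2)) •
    ![rpoly n * Real.cos (2 * Real.pi * i / n), rpoly n * Real.sin (2 * Real.pi * i / n), 1]

/-- The unit effect `u = (0,0,1)ᵀ`. -/
noncomputable def uEff : Fin 3 → ℝ := ![0, 0, 1]

/-- for odd `n ≥ 3` and `r, s ∈ {1,…,n}`:
(i) `ē_r · e_s = 0` iff `r ≡ s (mod n)` (the only extreme effect orthogonal to `ē_r` is `e_r`);
(ii) `ē_r · ē_s > 0` (no two non-ray extremal effects are orthogonal). -/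
theorem odd_gon_bar_effect_orthogonality
    (n : ℕ) (hn : 3 ≤ n) (hodd : Odd n) :
    ∀ r ∈ Finset.Icc 1 n, ∀ s ∈ Finset.Icc 1 n,
      (((uEff - eOdd n r) ⬝ᵥ eOdd n s = 0) ↔ r % n = s % n) ∧
      0 < (uEff - eOdd n r) ⬝ᵥ (uEff - eOdd n s) := by
  intro r hr s hs
  rw [Finset.mem_Icc] at hr hs
  obtain ⟨hr1, hrn⟩ := hr
  obtain ⟨hs1, hsn⟩ := hs
  have hπ := Real.pi_pos
  have hn0 : (0:ℝ) < n := by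
    have : 0 < n := by omega
    exact_mod_cast this
  have hc : 0 < Real.cos (Real.pi / n) := by
    apply Real.cos_pos_of_mem_Ioo
    constructor
    · have : 0 < Real.pi / n := by positivity
      linarith
    · have h3 : Real.pi / n ≤ Real.pi / 3 := by
        gcongr
        exact_mod_cast hn
      linarith
  have hc1 : Real.cos (Real.pi / n) < 1 := by
    have hpos : 0 < Real.pi / n := by positivity
    have h3 : Real.pi / n ≤ Real.pi / 3 := by
      gcongr
      exact_mod_cast hn
    rcases eq_or_lt_of_le (Real.cos_le_one (Real.pi / n)) with he | h
    · exfalso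
      have := (Real.cos_eq_one_iff_of_lt_of_lt (by linarith) (by linarith)).mp he
      linarith
    · exact h
  have hR2 : rpoly n ^ 2 = 1 / Real.cos (Real.pi / n) := Real.sq_sqrt (by positivity)
  have hR1 : 1 < rpoly n ^ 2 := by
    rw [hR2, lt_div_iff₀ hc]; linarith
  have hden : (0:ℝ) < 1 + rpoly n ^ 2 := by linarith
  have hkey1 : (uEff - eOdd n r) ⬝ᵥ eOdd n s
      = (1/(1 + rpoly n ^ 2))^2 * rpoly n ^ 2 *
        (1 - Real.cos (2 * Real.pi * r / n - 2 * Real.pi * s / n)) := by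
    simp only [eOdd, uEff, dotProduct, Fin.sum_univ_three, Pi.sub_apply,
      Pi.smul_apply, smul_eq_mul, Matrix.cons_val_zero, Matrix.cons_val_one,
      Matrix.head_cons, Matrix.cons_val_two, Matrix.tail_cons]
    rw [Real.cos_sub]
    field_simp
    ring
  have hkey2 : (uEff - eOdd n r) ⬝ᵥ (uEff - eOdd n s)
      = (1/(1 + rpoly n ^ 2))^2 * rpoly n ^ 2 *
        (Real.cos (2 * Real.pi * r / n - 2 * Real.pi * s / n) + rpoly n ^ 2) := by
    simp only [eOdd, uEff, dotProduct, Fin.sum_univ_three, Pi.sub_apply,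
      Pi.smul_apply, smul_eq_mul, Matrix.cons_val_zero, Matrix.cons_val_one,
      Matrix.head_cons, Matrix.cons_val_two, Matrix.tail_cons]
    rw [Real.cos_sub]
    field_simp
    ring
  have hK : 0 < (1/(1 + rpoly n ^ 2))^2 * rpoly n ^ 2 := by positivity
  have hmod : r % n = s % n ↔ r = s := by
    constructor
    · intro h
      have hr' : r % n = if r = n then 0 else r := by
        split
        · next h' => rw [h']; exact Nat.mod_self n
        · exact Nat.mod_eq_of_lt (by omega)
      have hs' : s % n = if s = n then 0 else s := by
        split
        · next h' => rw [h']; exact Nat.mod_self n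
        · exact Nat.mod_eq_of_lt (by omega)
      rw [hr', hs'] at h
      split at h <;> split at h <;> omega
    · intro h; rw [h]
  have hA1 : 0 < 2 * Real.pi * r / n := by
    have : (0:ℝ) < r := by exact_mod_cast Nat.lt_of_lt_of_le one_pos hr1
    positivity
  have hA2 : 2 * Real.pi * r / n ≤ 2 * Real.pi := by
    rw [div_le_iff₀ hn0]
    have : (r:ℝ) ≤ n := by exact_mod_cast hrn
    nlinarith
  have hB1 : 0 < 2 * Real.pi * s / n := by
    have : (0:ℝ) < s := by exact_mod_cast Nat.lt_of_lt_of_le one_pos hs1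
    positivity
  have hB2 : 2 * Real.pi * s / n ≤ 2 * Real.pi := by
    rw [div_le_iff₀ hn0]
    have : (s:ℝ) ≤ n := by exact_mod_cast hsn
    nlinarith
  constructor
  · rw [hkey1, hmod]
    constructor
    · intro h
      have h0 : 1 - Real.cos (2 * Real.pi * r / n - 2 * Real.pi * s / n) = 0 :=
        (mul_eq_zero.mp h).resolve_left hK.ne'
      have hcos : Real.cos (2 * Real.pi * r / n - 2 * Real.pi * s / n) = 1 := by linarith
      have hΔ : 2 * Real.pi * r / n - 2 * Real.pi * s / n = 0 := by
        rw [Real.cos_eq_one_iff_of_lt_of_lt (by linarith) (by linarith)] at hcos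
        exact hcos
      have h2π : (2 * Real.pi) ≠ 0 := by positivity
      have hrs : (r:ℝ) = s := by
        have h' : 2 * Real.pi * r = 2 * Real.pi * s := by
          field_simp at hΔ
          linarith
        exact mul_left_cancel₀ h2π h'
      exact_mod_cast hrs
    · intro h
      rw [h, sub_self, Real.cos_zero, sub_self, mul_zero]
  · rw [hkey2]
    apply mul_pos hK
    have := Real.neg_one_le_cos (2 * Real.pi * r / n - 2 * Real.pi * s / n)
    linarith
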